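/- Let α_n(a,b) = Σ 2^{dd(π)} over permutations of [n] with no double ascents whose descent word starts with an ascent and ends with a descent. Then for n ≥ 3, α_n(a,b) = n · α_{n−1}(a,b) − 2·(−1)^n, with initial value α_2(a,b) = 0. -/
import Mathlib


open Finset
open scoped Classical

/-- π has an ascent at position i (0-indexed): π_i < π_{i+1}. -/
def Asc {n : ℕ} (π : Equiv.Perm (Fin n)) (i : ℕ) : Prop :=
  ∃ h : i + 1 < n, π ⟨i, Nat.lt_of_succ_lt h⟩ < π ⟨i + 1, h⟩

/-- π has a descent at position i (0-indexed): π_i > π_{i+1}. -/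
def Desc {n : ℕ} (π : Equiv.Perm (Fin n)) (i : ℕ) : Prop :=
  ∃ h : i + 1 < n, π ⟨i + 1, h⟩ < π ⟨i, Nat.lt_of_succ_lt h⟩

/-- The number of double descents of π: positions i with π_i > π_{i+1} > π_{i+2}. -/
noncomputable def dd {n : ℕ} (π : Equiv.Perm (Fin n)) : ℕ :=
  ((Finset.range n).filter (fun i => Desc π i ∧ Desc π (i + 1))).card

/-- π has no double ascents: no i with π_i < π_{i+1} < π_{i+2}. -/
def NoDoubleAsc {n : ℕ} (π : Equiv.Perm (Fin n)) : Prop :=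
  ∀ i : ℕ, ¬ (Asc π i ∧ Asc π (i + 1))

/-- α_n(a,b) = Σ 2^{dd(π)} over permutations of [n] with no double ascents whose
descent word starts with an ascent and ends with a descent. -/
noncomputable def alphaAB (n : ℕ) : ℕ :=
  ∑ π ∈ Finset.univ.filter
      (fun π : Equiv.Perm (Fin n) => NoDoubleAsc π ∧ Asc π 0 ∧ Desc π (n - 2)),
    2 ^ dd π


namespace AlphaAux

noncomputable def D (k : ℕ) : ℤ := numDerangements k

lemma D_succ (n : ℕ) : D (n+1) = (n+1) * D n - (-1)^n := by
  unfold D; exact_mod_cast numDerangements_succ n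

/-- alternating binomial sum, shifted version -/
lemma alt_sum (n : ℕ) (hn : 1 ≤ n) :
    ∑ i ∈ range (n+1), (n.choose i : ℤ) * (-1)^(n - i) = 0 := by
  have h0 : ∑ i ∈ range (n+1), (-1:ℤ)^i * (n.choose i) = 0 :=
    Int.alternating_sum_range_choose_of_ne (by omega)
  have : ∑ i ∈ range (n+1), (n.choose i : ℤ) * (-1)^(n-i)
      = (-1)^n * ∑ i ∈ range (n+1), (-1:ℤ)^i * (n.choose i) := by
    rw [Finset.mul_sum]
    refine Finset.sum_congr rfl fun i hi => ?_
    have hiLe : i ≤ n := by simpa [Nat.lt_succ_iff] using hi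
    have key : (-1:ℤ)^(n-i) = (-1)^n * (-1)^i := by
      rw [← pow_add, show n + i = (n-i) + 2*i by omega, pow_add, pow_mul]
      norm_num
    rw [key]; ring
  rw [this, h0, mul_zero]

lemma U_eq (n : ℕ) :
    ∑ i ∈ range (n+2), (i:ℤ) * ((n+1).choose i) * D (n+1-i)
      = (n+1) * ∑ i ∈ range (n+1), (n.choose i : ℤ) * D (n-i) := by
  rw [Finset.sum_range_succ', Finset.mul_sum]
  simp only [Nat.cast_zero, zero_mul, add_zero]
  refine Finset.sum_congr rfl fun i hi => ?_
  have h := Nat.add_one_mul_choose_eq n i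
  have h' : ((n:ℤ)+1) * (n.choose i) = ((n+1).choose (i+1) : ℤ) * (i+1) := by
    exact_mod_cast congrArg (Nat.cast : ℕ → ℤ) h
  have hidx : n + 1 - (i+1) = n - i := by omega
  rw [hidx]
  push_cast
  linear_combination (-(D (n-i))) * h'

lemma T_eq (n : ℕ) :
    ∑ i ∈ range (n+1), (n.choose i : ℤ) * D (n-i) = (n.factorial : ℤ) := by
  induction n using Nat.strong_induction_on with
  | _ n ih =>
    match n with
    | 0 => simp [D, numDerangements_zero]
    | 1 =>
        rw [Finset.sum_range_succ, Finset.sum_range_succ]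
        simp [D, numDerangements_zero, numDerangements_one]
    | (k+2) =>
      have ih1 := ih (k+1) (by omega)
      have ih0 := ih k (by omega)
      set N := k + 1 with hN
      -- peel i = 0
      rw [Finset.sum_range_succ']
      simp only [Nat.choose_zero_right, Nat.cast_one, one_mul, Nat.sub_zero]
      -- Pascal on (N+1).choose (i+1)
      have pas : ∀ i, ((N+1).choose (i+1) : ℤ) = (N.choose i : ℤ) + (N.choose (i+1) : ℤ) := by
        intro i; exact_mod_cast congrArg (Nat.cast : ℕ → ℤ) (Nat.choose_succ_succ N i)
      have split : ∑ i ∈ range (N+1), ((N+1).choose (i+1) : ℤ) * D (N+1-(i+1))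
          = (∑ i ∈ range (N+1), (N.choose i : ℤ) * D (N-i))
            + ∑ i ∈ range (N+1), (N.choose (i+1) : ℤ) * D (N-i) := by
        rw [← Finset.sum_add_distrib]
        refine Finset.sum_congr rfl fun i hi => ?_
        rw [pas, show N+1-(i+1) = N - i by omega]; ring
      rw [split, ih1]
      -- second sum + D(N+1) equals S' = ∑_{i∈range(N+1)} C(N,i) D(N+1-i)
      have hS' : (∑ i ∈ range (N+1), (N.choose (i+1) : ℤ) * D (N-i)) + D (N+1)
          = ∑ i ∈ range (N+1), (N.choose i : ℤ) * D (N+1-i) := by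
        have e1 : ∑ i ∈ range (N+2), (N.choose i : ℤ) * D (N+1-i)
            = (∑ i ∈ range (N+1), (N.choose (i+1) : ℤ) * D (N-i)) + D (N+1) := by
          rw [Finset.sum_range_succ']
          simp only [Nat.choose_zero_right, Nat.cast_one, one_mul, Nat.sub_zero]
          congr 1
          refine Finset.sum_congr rfl fun i hi => ?_
          rw [show N+1-(i+1) = N - i by omega]
        have e2 : ∑ i ∈ range (N+2), (N.choose i : ℤ) * D (N+1-i)
            = ∑ i ∈ range (N+1), (N.choose i : ℤ) * D (N+1-i) := by
          rw [Finset.sum_range_succ]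
          simp [Nat.choose_succ_self]
        rw [← e1, e2]
      -- expand S' via the derangement recursion
      have hU : ∑ i ∈ range (k+2), (i:ℤ) * ((k+1).choose i) * D (k+1-i)
          = (k+1) * (k.factorial : ℤ) := by
        rw [U_eq k, ih0]
      have hSval : ∑ i ∈ range (N+1), (N.choose i : ℤ) * D (N+1-i)
          = ((N:ℤ)+1) * ((k+1).factorial : ℤ) - (k+1) * (k.factorial : ℤ) := by
        have expand : ∀ i ∈ range (N+1),
            (N.choose i : ℤ) * D (N+1-i)
              = (((N:ℤ)+1) * ((N.choose i : ℤ) * D (N-i))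
                  - (i:ℤ) * (N.choose i : ℤ) * D (N-i))
                - (N.choose i : ℤ) * (-1)^(N-i) := by
          intro i hi
          have hiLe : i ≤ N := by simpa [Nat.lt_succ_iff] using hi
          have h1 : N + 1 - i = (N - i) + 1 := by omega
          rw [h1, D_succ]
          have h2 : ((N - i : ℕ) : ℤ) = (N:ℤ) - i := by
            push_cast [Nat.cast_sub hiLe]; ring
          rw [h2]
          ring
        rw [Finset.sum_congr rfl expand, Finset.sum_sub_distrib, alt_sum N (by omega),
          Finset.sum_sub_distrib, ← Finset.mul_sum, ih1, hU]
        ring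
      rw [add_assoc, hS', hSval, hN]
      rw [show (k+2).factorial = (k+2)*(k+1).factorial from rfl,
          show (k+1).factorial = (k+1)*(k.factorial) from rfl]
      push_cast; ring

noncomputable def fZ (m p : ℕ) : ℤ := ∑ j ∈ range m, (j : ℤ) * D (m - 1 - j) * (p.choose j)
noncomputable def gZ (m p : ℕ) : ℤ := -∑ j ∈ range m, ((j : ℤ) - 1) * D (m - 1 - j) * (p.choose j)

lemma hockey (p j : ℕ) : ∑ s ∈ range p, ((s.choose j : ℤ)) = (p.choose (j+1) : ℤ) := by
  induction p with
  | zero => simp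
  | succ p ih =>
      rw [Finset.sum_range_succ, ih]
      rw [show (p+1).choose (j+1) = p.choose j + p.choose (j+1) from Nat.choose_succ_succ p j]
      push_cast; ring

lemma star (m : ℕ) (hm : 1 ≤ m) :
    ∑ j ∈ range m, (j:ℤ) * D (m-1-j) * (m.choose (j+1)) = D m := by
  have hU : ∑ i ∈ range (m+1), (i:ℤ) * (m.choose i) * D (m-i) = (m.factorial : ℤ) := by
    obtain ⟨n, rfl⟩ := Nat.exists_eq_add_of_le hm
    rw [show 1 + n = n + 1 by omega, U_eq n, T_eq n]
    rw [show (n+1).factorial = (n+1) * n.factorial from rfl]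
    push_cast; ring
  have h0 : ∑ i ∈ range (m+1), ((i:ℤ) - 1) * (m.choose i) * D (m-i) = 0 := by
    have : ∀ i ∈ range (m+1), ((i:ℤ) - 1) * (m.choose i) * D (m-i)
        = (i:ℤ) * (m.choose i) * D (m-i) - (m.choose i : ℤ) * D (m-i) := by
      intro i _; ring
    rw [Finset.sum_congr rfl this, Finset.sum_sub_distrib, hU, T_eq]
    ring
  rw [Finset.sum_range_succ'] at h0
  simp only [Nat.cast_zero, Nat.choose_zero_right, Nat.cast_one, Nat.sub_zero] at h0
  have : ∀ j ∈ range m, ((j:ℤ) + 1 - 1) * (m.choose (j+1)) * D (m-(j+1))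
      = (j:ℤ) * D (m-1-j) * (m.choose (j+1)) := by
    intro j _
    rw [show m - (j+1) = m - 1 - j by omega]
    push_cast; ring
  rw [Finset.sum_congr rfl (by intro j hj; push_cast; exact this j hj)] at h0
  linarith [h0]

lemma fZ_partial (m P : ℕ) :
    ∑ s ∈ range P, fZ m s = ∑ j ∈ range m, (j:ℤ) * D (m-1-j) * (P.choose (j+1)) := by
  unfold fZ
  rw [Finset.sum_comm]
  refine Finset.sum_congr rfl fun j _ => ?_
  rw [show (∑ s ∈ range P, (j:ℤ) * D (m-1-j) * (s.choose j))
      = (j:ℤ) * D (m-1-j) * ∑ s ∈ range P, (s.choose j : ℤ) by rw [Finset.mul_sum]]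
  rw [hockey]

lemma gZ_rec (m p : ℕ) (hm : 1 ≤ m) (hp : p ≤ m) :
    gZ (m+1) p = ∑ s ∈ Ico p m, fZ m s := by
  rw [Finset.sum_Ico_eq_sub _ hp, fZ_partial, fZ_partial, star m hm]
  unfold gZ
  rw [Finset.sum_range_succ']
  simp only [Nat.cast_zero, Nat.choose_zero_right, Nat.cast_one, Nat.sub_zero, zero_sub,
    mul_one, neg_mul, one_mul]
  have : ∀ j ∈ range m, ((j:ℤ) + 1 - 1) * D (m+1-1-(j+1)) * (p.choose (j+1))
      = (j:ℤ) * D (m-1-j) * (p.choose (j+1)) := by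
    intro j _
    rw [show m + 1 - 1 - (j+1) = m - 1 - j by omega]
    ring
  rw [Finset.sum_congr rfl (by intro j hj; push_cast; exact this j hj)]
  simp only [Nat.add_sub_cancel]
  ring

lemma gZ_total (M : ℕ) (hM : 1 ≤ M) :
    ∑ p ∈ range M, gZ M p = (M.factorial : ℤ) - 2 * D M := by
  unfold gZ
  rw [show (∑ p ∈ range M, -∑ j ∈ range M, ((j:ℤ) - 1) * D (M-1-j) * (p.choose j))
      = -∑ p ∈ range M, ∑ j ∈ range M, ((j:ℤ) - 1) * D (M-1-j) * (p.choose j) by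
        rw [← Finset.sum_neg_distrib]]
  rw [Finset.sum_comm]
  have h1 : ∀ j ∈ range M, (∑ p ∈ range M, ((j:ℤ) - 1) * D (M-1-j) * (p.choose j))
      = ((j:ℤ) - 1) * D (M-1-j) * (M.choose (j+1)) := by
    intro j _
    rw [show (∑ p ∈ range M, ((j:ℤ) - 1) * D (M-1-j) * (p.choose j))
        = ((j:ℤ)-1) * D (M-1-j) * ∑ p ∈ range M, (p.choose j : ℤ) by rw [Finset.mul_sum]]
    rw [hockey]
  rw [Finset.sum_congr rfl h1]
  have hsplit : ∀ j ∈ range M, ((j:ℤ) - 1) * D (M-1-j) * (M.choose (j+1))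
      = (j:ℤ) * D (M-1-j) * (M.choose (j+1)) - (M.choose (j+1) : ℤ) * D (M-1-j) := by
    intro j _; ring
  rw [Finset.sum_congr rfl hsplit, Finset.sum_sub_distrib, star M hM]
  have hT : ∑ j ∈ range M, ((M.choose (j+1) : ℤ)) * D (M-(j+1)) + D M = (M.factorial : ℤ) := by
    have := T_eq M
    rw [Finset.sum_range_succ'] at this
    simpa using this
  have : ∑ j ∈ range M, ((M.choose (j+1) : ℤ)) * D (M-1-j)
      = ∑ j ∈ range M, ((M.choose (j+1) : ℤ)) * D (M-(j+1)) := by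
    refine Finset.sum_congr rfl fun j _ => by rw [show M-1-j = M-(j+1) by omega]
  rw [this]
  linarith [hT]

lemma fZ_rec (m p : ℕ) :
    fZ (m+1) p = ∑ s ∈ range p, (2 * fZ m s + gZ m s) := by
  have : ∀ s, 2 * fZ m s + gZ m s
      = ∑ j ∈ range m, ((j : ℤ) + 1) * D (m - 1 - j) * (s.choose j) := by
    intro s
    unfold fZ gZ
    rw [Finset.mul_sum, ← Finset.sum_neg_distrib, ← Finset.sum_add_distrib]
    exact Finset.sum_congr rfl fun j _ => by ring
  simp only [this]
  rw [Finset.sum_comm]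
  unfold fZ
  rw [Finset.sum_range_succ']
  simp only [Nat.cast_zero, zero_mul, mul_zero, zero_add, add_zero]
  · refine (Finset.sum_congr rfl fun j _ => ?_).symm
    rw [show (∑ x ∈ range p, ((j:ℤ) + 1) * D (m - 1 - j) * ↑(x.choose j))
        = ((j:ℤ)+1) * D (m-1-j) * ∑ x ∈ range p, (x.choose j : ℤ) by
          rw [Finset.mul_sum]]
    rw [show m + 1 - 1 - (j+1) = m - 1 - j by omega]
    rw [hockey]
    push_cast
    ring

/-- prepend the value `p` to the pattern `σ`. -/
noncomputable def consPerm {n : ℕ} (p : Fin (n+1)) (σ : Equiv.Perm (Fin n)) :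
    Equiv.Perm (Fin (n+1)) :=
  Equiv.ofBijective (fun i => Fin.cases p (fun j => p.succAbove (σ j)) i) <| by
    rw [Fintype.bijective_iff_injective_and_card]
    refine ⟨?_, rfl⟩
    intro i j h
    induction i using Fin.cases with
    | zero =>
        induction j using Fin.cases with
        | zero => rfl
        | succ j =>
            simp only [Fin.cases_zero, Fin.cases_succ] at h
            exact absurd h.symm (Fin.succAbove_ne p (σ j))
    | succ i =>
        induction j using Fin.cases with
        | zero =>
            simp only [Fin.cases_zero, Fin.cases_succ] at h
            exact absurd h (Fin.succAbove_ne p (σ i))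
        | succ j =>
            simp only [Fin.cases_succ] at h
            have := σ.injective (Fin.succAbove_right_injective h)
            rw [this]

@[simp] lemma consPerm_zero {n : ℕ} (p : Fin (n+1)) (σ : Equiv.Perm (Fin n)) :
    consPerm p σ 0 = p := rfl

@[simp] lemma consPerm_succ {n : ℕ} (p : Fin (n+1)) (σ : Equiv.Perm (Fin n)) (j : Fin n) :
    consPerm p σ j.succ = p.succAbove (σ j) := by
  simp [consPerm, Equiv.ofBijective]

lemma sum_perm_decomp {n : ℕ} {M : Type*} [AddCommMonoid M] (F : Equiv.Perm (Fin (n+1)) → M) :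
    ∑ π : Equiv.Perm (Fin (n+1)), F π
      = ∑ p : Fin (n+1), ∑ σ : Equiv.Perm (Fin n), F (consPerm p σ) := by
  have step1 : ∑ x : Fin (n+1) × Equiv.Perm (Fin n), F (consPerm x.1 x.2)
      = ∑ p : Fin (n+1), ∑ σ : Equiv.Perm (Fin n), F (consPerm p σ) :=
    Fintype.sum_prod_type _
  rw [← step1]
  refine (Fintype.sum_bijective (fun x : Fin (n+1) × Equiv.Perm (Fin n) => consPerm x.1 x.2)
    ?_ _ _ (fun x => rfl)).symm
  rw [Fintype.bijective_iff_injective_and_card]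
  constructor
  · rintro ⟨p, σ⟩ ⟨p', σ'⟩ h
    have h0 : p = p' := by
      have := congrArg (fun π : Equiv.Perm (Fin (n+1)) => π 0) h
      simpa using this
    subst h0
    have hσ : σ = σ' := by
      ext j
      have := congrArg (fun π : Equiv.Perm (Fin (n+1)) => π j.succ) h
      simp only [consPerm_succ] at this
      have := Fin.succAbove_right_injective this
      exact congrArg Fin.val this
    rw [hσ]
  · simp [Fintype.card_perm, Nat.factorial_succ]

section AscDesc

variable {n : ℕ}

lemma asc_iff' (π : Equiv.Perm (Fin n)) (i : ℕ) (h : i+1 < n) :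
    Asc π i ↔ π ⟨i, Nat.lt_of_succ_lt h⟩ < π ⟨i+1, h⟩ :=
  ⟨fun ⟨_, hlt⟩ => hlt, fun hlt => ⟨h, hlt⟩⟩

lemma desc_iff' (π : Equiv.Perm (Fin n)) (i : ℕ) (h : i+1 < n) :
    Desc π i ↔ π ⟨i+1, h⟩ < π ⟨i, Nat.lt_of_succ_lt h⟩ :=
  ⟨fun ⟨_, hlt⟩ => hlt, fun hlt => ⟨h, hlt⟩⟩

lemma asc_or_desc (π : Equiv.Perm (Fin n)) (i : ℕ) (h : i+1 < n) :
    Asc π i ∨ Desc π i := by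
  have hne : π ⟨i, Nat.lt_of_succ_lt h⟩ ≠ π ⟨i+1, h⟩ := by
    intro heq
    have := π.injective heq
    simp [Fin.ext_iff] at this
  rcases lt_or_gt_of_ne hne with h1 | h1
  · exact Or.inl ⟨h, h1⟩
  · exact Or.inr ⟨h, h1⟩

lemma not_asc_of_desc (π : Equiv.Perm (Fin n)) (i : ℕ) (h : Desc π i) : ¬ Asc π i := by
  obtain ⟨hb, hlt⟩ := h
  rintro ⟨hb', hlt'⟩
  exact absurd hlt' (lt_asymm hlt)

lemma desc_of_not_asc (π : Equiv.Perm (Fin n)) (i : ℕ) (hb : i+1 < n) (h : ¬ Asc π i) :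
    Desc π i := (asc_or_desc π i hb).resolve_left h

lemma asc_bound (π : Equiv.Perm (Fin n)) (i : ℕ) (h : Asc π i) : i + 1 < n := by
  obtain ⟨hb, -⟩ := h; exact hb

lemma desc_bound (π : Equiv.Perm (Fin n)) (i : ℕ) (h : Desc π i) : i + 1 < n := by
  obtain ⟨hb, -⟩ := h; exact hb

variable (p : Fin (n+1)) (σ : Equiv.Perm (Fin n))

lemma asc_consPerm_succ (i : ℕ) : Asc (consPerm p σ) (i+1) ↔ Asc σ i := by
  constructor
  · rintro ⟨h, hlt⟩
    have h' : i + 1 < n := by omega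
    refine ⟨h', ?_⟩
    have e1 : (⟨i+1, Nat.lt_of_succ_lt h⟩ : Fin (n+1)) = (⟨i, Nat.lt_of_succ_lt h'⟩ : Fin n).succ := rfl
    have e2 : (⟨i+1+1, h⟩ : Fin (n+1)) = (⟨i+1, h'⟩ : Fin n).succ := rfl
    rw [e1, e2, consPerm_succ, consPerm_succ] at hlt
    exact Fin.succAbove_lt_succAbove_iff.mp hlt
  · rintro ⟨h', hlt⟩
    have h : i + 1 + 1 < n + 1 := by omega
    refine ⟨h, ?_⟩
    have e1 : (⟨i+1, Nat.lt_of_succ_lt h⟩ : Fin (n+1)) = (⟨i, Nat.lt_of_succ_lt h'⟩ : Fin n).succ := rfl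
    have e2 : (⟨i+1+1, h⟩ : Fin (n+1)) = (⟨i+1, h'⟩ : Fin n).succ := rfl
    rw [e1, e2, consPerm_succ, consPerm_succ]
    exact Fin.succAbove_lt_succAbove_iff.mpr hlt

lemma desc_consPerm_succ (i : ℕ) : Desc (consPerm p σ) (i+1) ↔ Desc σ i := by
  constructor
  · rintro ⟨h, hlt⟩
    have h' : i + 1 < n := by omega
    refine ⟨h', ?_⟩
    have e1 : (⟨i+1, Nat.lt_of_succ_lt h⟩ : Fin (n+1)) = (⟨i, Nat.lt_of_succ_lt h'⟩ : Fin n).succ := rfl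
    have e2 : (⟨i+1+1, h⟩ : Fin (n+1)) = (⟨i+1, h'⟩ : Fin n).succ := rfl
    rw [e1, e2, consPerm_succ, consPerm_succ] at hlt
    exact Fin.succAbove_lt_succAbove_iff.mp hlt
  · rintro ⟨h', hlt⟩
    have h : i + 1 + 1 < n + 1 := by omega
    refine ⟨h, ?_⟩
    have e1 : (⟨i+1, Nat.lt_of_succ_lt h⟩ : Fin (n+1)) = (⟨i, Nat.lt_of_succ_lt h'⟩ : Fin n).succ := rfl
    have e2 : (⟨i+1+1, h⟩ : Fin (n+1)) = (⟨i+1, h'⟩ : Fin n).succ := rfl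
    rw [e1, e2, consPerm_succ, consPerm_succ]
    exact Fin.succAbove_lt_succAbove_iff.mpr hlt

lemma asc_consPerm_zero (hn : 0 < n) :
    Asc (consPerm p σ) 0 ↔ (p : ℕ) ≤ ((σ ⟨0, hn⟩ : Fin n) : ℕ) := by
  have h : 0 + 1 < n + 1 := by omega
  rw [asc_iff' _ 0 h]
  have e0 : (⟨0, Nat.lt_of_succ_lt h⟩ : Fin (n+1)) = 0 := rfl
  have e1 : (⟨0+1, h⟩ : Fin (n+1)) = (⟨0, hn⟩ : Fin n).succ := rfl
  rw [e0, e1, consPerm_zero, consPerm_succ]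
  rw [Fin.lt_succAbove_iff_le_castSucc, Fin.le_def]
  simp

lemma desc_consPerm_zero (hn : 0 < n) :
    Desc (consPerm p σ) 0 ↔ ((σ ⟨0, hn⟩ : Fin n) : ℕ) < (p : ℕ) := by
  have h : 0 + 1 < n + 1 := by omega
  rw [desc_iff' _ 0 h]
  have e0 : (⟨0, Nat.lt_of_succ_lt h⟩ : Fin (n+1)) = 0 := rfl
  have e1 : (⟨0+1, h⟩ : Fin (n+1)) = (⟨0, hn⟩ : Fin n).succ := rfl
  rw [e0, e1, consPerm_zero, consPerm_succ]
  rw [Fin.succAbove_lt_iff_castSucc_lt, Fin.lt_def]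
  simp

lemma nda_consPerm :
    NoDoubleAsc (consPerm p σ)
      ↔ (¬ (Asc (consPerm p σ) 0 ∧ Asc (consPerm p σ) 1)) ∧ NoDoubleAsc σ := by
  constructor
  · intro H
    refine ⟨H 0, fun i hi => ?_⟩
    exact H (i+1) ⟨(asc_consPerm_succ p σ i).mpr hi.1, (asc_consPerm_succ p σ (i+1)).mpr hi.2⟩
  · rintro ⟨h0, H⟩ i
    match i with
    | 0 => exact h0
    | (i+1) =>
        rintro ⟨h1, h2⟩
        exact H i ⟨(asc_consPerm_succ p σ i).mp h1, (asc_consPerm_succ p σ (i+1)).mp h2⟩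

lemma dd_consPerm :
    dd (consPerm p σ) = dd σ +
      (if Desc (consPerm p σ) 0 ∧ Desc (consPerm p σ) 1 then 1 else 0) := by
  unfold dd
  rw [Finset.card_filter, Finset.card_filter, Finset.sum_range_succ']
  congr 1
  refine Finset.sum_congr rfl fun i _ => ?_
  congr 1
  rw [eq_iff_iff]
  exact and_congr (desc_consPerm_succ p σ i) (desc_consPerm_succ p σ (i+1))

end AscDesc

/-- class `bb`: starts with a descent, ends with a descent, no double ascents. -/
def BBc (m : ℕ) (σ : Equiv.Perm (Fin m)) : Prop :=
  NoDoubleAsc σ ∧ Desc σ 0 ∧ Desc σ (m-2)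

/-- class `ab`: starts with an ascent, ends with a descent, no double ascents. -/
def ABc (m : ℕ) (σ : Equiv.Perm (Fin m)) : Prop :=
  NoDoubleAsc σ ∧ Asc σ 0 ∧ Desc σ (m-2)

noncomputable def SB (m p : ℕ) : ℕ :=
  ∑ σ : Equiv.Perm (Fin (m+2)), if BBc (m+2) σ ∧ ((σ 0 : Fin (m+2)) : ℕ) = p then 2^(dd σ) else 0

noncomputable def SA (m p : ℕ) : ℕ :=
  ∑ σ : Equiv.Perm (Fin (m+2)), if ABc (m+2) σ ∧ ((σ 0 : Fin (m+2)) : ℕ) = p then 2^(dd σ) else 0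

lemma sum_ite_indicator (S : Finset ℕ) (a : ℕ) (Q : Prop) [Decidable Q] (w : ℕ) :
    ∑ s ∈ S, (if Q ∧ a = s then w else 0) = if Q ∧ a ∈ S then w else 0 := by
  by_cases hQ : Q
  · simp only [hQ, true_and]
    simp only [eq_comm (a := a)]
    exact Finset.sum_ite_eq' S a (fun _ => w)
  · simp [hQ]

/-- key pointwise lemma for the `ab` class. -/
lemma ab_cons_iff (m : ℕ) (q : Fin (m+3)) (σ : Equiv.Perm (Fin (m+2))) :
    ABc (m+3) (consPerm q σ) ↔ ((q : ℕ) ≤ ((σ 0 : Fin (m+2)) : ℕ) ∧ BBc (m+2) σ) := by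
  have hn : 0 < m + 2 := by omega
  have h0 : (⟨0, hn⟩ : Fin (m+2)) = 0 := rfl
  have hshift : Desc (consPerm q σ) (m+1) ↔ Desc σ m := desc_consPerm_succ q σ m
  have hidx : (m+3) - 2 = m + 1 := by omega
  have hidx' : (m+2) - 2 = m := by omega
  constructor
  · rintro ⟨H, hA0, hD⟩
    obtain ⟨h01, Hσ⟩ := (nda_consPerm q σ).mp H
    have hq : (q : ℕ) ≤ ((σ 0 : Fin (m+2)) : ℕ) := by
      have := (asc_consPerm_zero q σ hn).mp hA0
      rwa [h0] at this
    have hnA : ¬ Asc σ 0 := by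
      intro hA
      exact h01 ⟨hA0, (asc_consPerm_succ q σ 0).mpr hA⟩
    have hD0 : Desc σ 0 := desc_of_not_asc σ 0 (by omega) hnA
    rw [hidx] at hD
    refine ⟨hq, Hσ, hD0, ?_⟩
    rw [hidx']
    exact hshift.mp hD
  · rintro ⟨hq, Hσ, hD0, hDm⟩
    rw [hidx'] at hDm
    have hA0 : Asc (consPerm q σ) 0 := by
      rw [asc_consPerm_zero q σ hn, h0]; exact hq
    refine ⟨?_, hA0, ?_⟩
    · rw [nda_consPerm]
      refine ⟨?_, Hσ⟩
      rintro ⟨-, hA1⟩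
      exact not_asc_of_desc σ 0 hD0 ((asc_consPerm_succ q σ 0).mp hA1)
    · rw [hidx]
      exact hshift.mpr hDm

/-- key pointwise lemma for the `bb` class. -/
lemma bb_cons_iff (m : ℕ) (q : Fin (m+3)) (σ : Equiv.Perm (Fin (m+2))) :
    BBc (m+3) (consPerm q σ)
      ↔ (((σ 0 : Fin (m+2)) : ℕ) < (q : ℕ) ∧ NoDoubleAsc σ ∧ Desc σ m) := by
  have hn : 0 < m + 2 := by omega
  have h0 : (⟨0, hn⟩ : Fin (m+2)) = 0 := rfl
  have hshift : Desc (consPerm q σ) (m+1) ↔ Desc σ m := desc_consPerm_succ q σ m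
  have hidx : (m+3) - 2 = m + 1 := by omega
  constructor
  · rintro ⟨H, hD0, hD⟩
    obtain ⟨-, Hσ⟩ := (nda_consPerm q σ).mp H
    have hq : ((σ 0 : Fin (m+2)) : ℕ) < (q : ℕ) := by
      have := (desc_consPerm_zero q σ hn).mp hD0
      rwa [h0] at this
    rw [hidx] at hD
    exact ⟨hq, Hσ, hshift.mp hD⟩
  · rintro ⟨hq, Hσ, hDm⟩
    have hD0 : Desc (consPerm q σ) 0 := by
      rw [desc_consPerm_zero q σ hn, h0]; exact hq
    refine ⟨?_, hD0, ?_⟩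
    · rw [nda_consPerm]
      refine ⟨?_, Hσ⟩
      rintro ⟨hA0, -⟩
      exact not_asc_of_desc _ 0 hD0 hA0
    · rw [hidx]
      exact hshift.mpr hDm

lemma dd_cons_of_asc0 {n : ℕ} (q : Fin (n+1)) (σ : Equiv.Perm (Fin n))
    (hA : Asc (consPerm q σ) 0) : dd (consPerm q σ) = dd σ := by
  rw [dd_consPerm]
  have : ¬ (Desc (consPerm q σ) 0 ∧ Desc (consPerm q σ) 1) := by
    rintro ⟨hD, -⟩
    exact not_asc_of_desc _ 0 hD hA
  simp [this]

lemma dd_cons_of_desc0 {n : ℕ} (q : Fin (n+1)) (σ : Equiv.Perm (Fin n))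
    (hD : Desc (consPerm q σ) 0) :
    dd (consPerm q σ) = dd σ + (if Desc σ 0 then 1 else 0) := by
  rw [dd_consPerm]
  congr 1
  have h1 : Desc (consPerm q σ) 1 ↔ Desc σ 0 := desc_consPerm_succ q σ 0
  by_cases h : Desc σ 0
  · simp [h, hD, h1]
  · simp [h, h1]

lemma L1 (m p : ℕ) (hp : p ≤ m + 2) :
    SA (m+1) p = ∑ s ∈ Ico p (m+2), SB m s := by
  classical
  have hRHS : ∑ s ∈ Ico p (m+2), SB m s
      = ∑ σ : Equiv.Perm (Fin (m+2)),
          (if BBc (m+2) σ ∧ ((σ 0 : Fin (m+2)) : ℕ) ∈ Ico p (m+2) then 2^(dd σ) else 0) := by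
    unfold SB
    rw [Finset.sum_comm]
    exact Finset.sum_congr rfl fun σ _ => sum_ite_indicator _ _ _ _
  show (∑ π : Equiv.Perm (Fin (m+3)),
      if ABc (m+3) π ∧ ((π 0 : Fin (m+3)) : ℕ) = p then 2^(dd π) else 0) = _
  rw [sum_perm_decomp]
  have hterm : ∀ (q : Fin (m+3)) (σ : Equiv.Perm (Fin (m+2))),
      (if ABc (m+3) (consPerm q σ) ∧ ((consPerm q σ 0 : Fin (m+3)) : ℕ) = p
        then 2^(dd (consPerm q σ)) else 0)
      = (if (((q:ℕ) ≤ ((σ 0 : Fin (m+2)) : ℕ) ∧ BBc (m+2) σ) ∧ (q:ℕ) = p)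
          then 2^(dd σ) else 0) := by
    intro q σ
    rw [consPerm_zero]
    by_cases hc : ((q:ℕ) ≤ ((σ 0 : Fin (m+2)) : ℕ) ∧ BBc (m+2) σ) ∧ (q:ℕ) = p
    · have hab : ABc (m+3) (consPerm q σ) := (ab_cons_iff m q σ).mpr hc.1
      have hdd : dd (consPerm q σ) = dd σ := dd_cons_of_asc0 q σ (by
        have hn : 0 < m + 2 := by omega
        rw [asc_consPerm_zero q σ hn]
        exact hc.1.1)
      rw [if_pos ⟨hab, hc.2⟩, if_pos hc, hdd]
    · have : ¬ (ABc (m+3) (consPerm q σ) ∧ (q:ℕ) = p) := by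
        intro h
        exact hc ⟨(ab_cons_iff m q σ).mp h.1, h.2⟩
      rw [if_neg this, if_neg hc]
  simp only [hterm]
  rw [Finset.sum_comm]
  have hcollapse : ∀ σ : Equiv.Perm (Fin (m+2)),
      (∑ q : Fin (m+3),
        if (((q:ℕ) ≤ ((σ 0 : Fin (m+2)) : ℕ) ∧ BBc (m+2) σ) ∧ (q:ℕ) = p)
          then 2^(dd σ) else 0)
      = (if BBc (m+2) σ ∧ ((σ 0 : Fin (m+2)) : ℕ) ∈ Ico p (m+2) then 2^(dd σ) else 0) := by
    intro σ
    rw [Finset.sum_eq_single (⟨p, by omega⟩ : Fin (m+3))]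
    · congr 1
      rw [eq_iff_iff]
      constructor
      · rintro ⟨⟨h1, h2⟩, -⟩
        exact ⟨h2, Finset.mem_Ico.mpr ⟨h1, (σ 0).is_lt⟩⟩
      · rintro ⟨h2, h1⟩
        exact ⟨⟨(Finset.mem_Ico.mp h1).1, h2⟩, rfl⟩

    · intro q _ hq
      rw [if_neg]
      rintro ⟨-, hqp⟩
      exact hq (Fin.ext (by simpa using hqp))
    · intro h
      exact absurd (Finset.mem_univ _) h
  rw [Finset.sum_congr rfl fun σ _ => hcollapse σ, hRHS]

lemma L2 (m p : ℕ) (hp : p ≤ m + 2) :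
    SB (m+1) p = ∑ s ∈ range p, (2 * SB m s + SA m s) := by
  classical
  have hRHS1 : ∑ s ∈ range p, SB m s
      = ∑ σ : Equiv.Perm (Fin (m+2)),
          (if BBc (m+2) σ ∧ ((σ 0 : Fin (m+2)) : ℕ) ∈ range p then 2^(dd σ) else 0) := by
    unfold SB
    rw [Finset.sum_comm]
    exact Finset.sum_congr rfl fun σ _ => sum_ite_indicator _ _ _ _
  have hRHS2 : ∑ s ∈ range p, SA m s
      = ∑ σ : Equiv.Perm (Fin (m+2)),
          (if ABc (m+2) σ ∧ ((σ 0 : Fin (m+2)) : ℕ) ∈ range p then 2^(dd σ) else 0) := by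
    unfold SA
    rw [Finset.sum_comm]
    exact Finset.sum_congr rfl fun σ _ => sum_ite_indicator _ _ _ _
  show (∑ π : Equiv.Perm (Fin (m+3)),
      if BBc (m+3) π ∧ ((π 0 : Fin (m+3)) : ℕ) = p then 2^(dd π) else 0) = _
  rw [sum_perm_decomp]
  have hterm : ∀ (q : Fin (m+3)) (σ : Equiv.Perm (Fin (m+2))),
      (if BBc (m+3) (consPerm q σ) ∧ ((consPerm q σ 0 : Fin (m+3)) : ℕ) = p
        then 2^(dd (consPerm q σ)) else 0)
      = (if ((((σ 0 : Fin (m+2)) : ℕ) < (q:ℕ) ∧ BBc (m+2) σ) ∧ (q:ℕ) = p)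
          then 2 * 2^(dd σ) else 0)
        + (if ((((σ 0 : Fin (m+2)) : ℕ) < (q:ℕ) ∧ ABc (m+2) σ) ∧ (q:ℕ) = p)
          then 2^(dd σ) else 0) := by
    intro q σ
    rw [consPerm_zero]
    have hn : 0 < m + 2 := by omega
    have hidx' : (m+2) - 2 = m := by omega
    by_cases hc : (((σ 0 : Fin (m+2)) : ℕ) < (q:ℕ) ∧ NoDoubleAsc σ ∧ Desc σ m) ∧ (q:ℕ) = p
    · have hbb : BBc (m+3) (consPerm q σ) := (bb_cons_iff m q σ).mpr hc.1
      have hD0π : Desc (consPerm q σ) 0 := by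
        rw [desc_consPerm_zero q σ hn]
        exact hc.1.1
      have hdd := dd_cons_of_desc0 q σ hD0π
      by_cases hD0 : Desc σ 0
      · have hBB : BBc (m+2) σ := ⟨hc.1.2.1, hD0, by rw [hidx']; exact hc.1.2.2⟩
        have hnAB : ¬ ABc (m+2) σ := by
          rintro ⟨-, hA, -⟩
          exact not_asc_of_desc σ 0 hD0 hA
        rw [if_pos ⟨hbb, hc.2⟩, if_pos ⟨⟨hc.1.1, hBB⟩, hc.2⟩,
          if_neg (by rintro ⟨⟨-, hab⟩, -⟩; exact hnAB hab), hdd, if_pos hD0, pow_succ]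
        ring
      · have hA0 : Asc σ 0 := (asc_or_desc σ 0 (by omega)).resolve_right hD0
        have hAB : ABc (m+2) σ := ⟨hc.1.2.1, hA0, by rw [hidx']; exact hc.1.2.2⟩
        have hnBB : ¬ BBc (m+2) σ := by
          rintro ⟨-, hD, -⟩
          exact hD0 hD
        rw [if_pos ⟨hbb, hc.2⟩,
          if_neg (show ¬ ((((σ 0 : Fin (m+2)) : ℕ) < (q:ℕ) ∧ BBc (m+2) σ) ∧ (q:ℕ) = p) by
            rintro ⟨⟨-, hbb'⟩, -⟩; exact hnBB hbb'),
          if_pos ⟨⟨hc.1.1, hAB⟩, hc.2⟩, hdd, if_neg hD0]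
        simp
    · have h1 : ¬ (BBc (m+3) (consPerm q σ) ∧ (q:ℕ) = p) := by
        intro h
        exact hc ⟨(bb_cons_iff m q σ).mp h.1, h.2⟩
      have h2 : ¬ ((((σ 0 : Fin (m+2)) : ℕ) < (q:ℕ) ∧ BBc (m+2) σ) ∧ (q:ℕ) = p) := by
        rintro ⟨⟨hlt, hN, hD0, hDm⟩, hqp⟩
        exact hc ⟨⟨hlt, hN, by rwa [hidx'] at hDm⟩, hqp⟩
      have h3 : ¬ ((((σ 0 : Fin (m+2)) : ℕ) < (q:ℕ) ∧ ABc (m+2) σ) ∧ (q:ℕ) = p) := by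
        rintro ⟨⟨hlt, hN, hA0, hDm⟩, hqp⟩
        exact hc ⟨⟨hlt, hN, by rwa [hidx'] at hDm⟩, hqp⟩
      rw [if_neg h1, if_neg h2, if_neg h3]
  simp only [hterm]
  have hsplit : ∀ q : Fin (m+3), (∑ σ : Equiv.Perm (Fin (m+2)),
      ((if ((((σ 0 : Fin (m+2)) : ℕ) < (q:ℕ) ∧ BBc (m+2) σ) ∧ (q:ℕ) = p)
          then 2 * 2^(dd σ) else 0)
        + (if ((((σ 0 : Fin (m+2)) : ℕ) < (q:ℕ) ∧ ABc (m+2) σ) ∧ (q:ℕ) = p)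
          then 2^(dd σ) else 0)))
      = (∑ σ : Equiv.Perm (Fin (m+2)),
          (if ((((σ 0 : Fin (m+2)) : ℕ) < (q:ℕ) ∧ BBc (m+2) σ) ∧ (q:ℕ) = p)
            then 2 * 2^(dd σ) else 0))
        + (∑ σ : Equiv.Perm (Fin (m+2)),
          (if ((((σ 0 : Fin (m+2)) : ℕ) < (q:ℕ) ∧ ABc (m+2) σ) ∧ (q:ℕ) = p)
            then 2^(dd σ) else 0)) := fun q => Finset.sum_add_distrib
  rw [Finset.sum_congr rfl fun q _ => hsplit q, Finset.sum_add_distrib]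
  have hcollapseB : ∀ σ : Equiv.Perm (Fin (m+2)),
      (∑ q : Fin (m+3),
        if ((((σ 0 : Fin (m+2)) : ℕ) < (q:ℕ) ∧ BBc (m+2) σ) ∧ (q:ℕ) = p)
          then 2 * 2^(dd σ) else 0)
      = (if BBc (m+2) σ ∧ ((σ 0 : Fin (m+2)) : ℕ) ∈ range p then 2 * 2^(dd σ) else 0) := by
    intro σ
    rw [Finset.sum_eq_single (⟨p, by omega⟩ : Fin (m+3))]
    · congr 1
      rw [eq_iff_iff]
      constructor
      · rintro ⟨⟨h1, h2⟩, -⟩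
        exact ⟨h2, Finset.mem_range.mpr h1⟩
      · rintro ⟨h2, h1⟩
        exact ⟨⟨Finset.mem_range.mp h1, h2⟩, rfl⟩
    · intro q _ hq
      rw [if_neg]
      rintro ⟨-, hqp⟩
      exact hq (Fin.ext (by simpa using hqp))
    · intro h
      exact absurd (Finset.mem_univ _) h
  have hcollapseA : ∀ σ : Equiv.Perm (Fin (m+2)),
      (∑ q : Fin (m+3),
        if ((((σ 0 : Fin (m+2)) : ℕ) < (q:ℕ) ∧ ABc (m+2) σ) ∧ (q:ℕ) = p)
          then 2^(dd σ) else 0)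
      = (if ABc (m+2) σ ∧ ((σ 0 : Fin (m+2)) : ℕ) ∈ range p then 2^(dd σ) else 0) := by
    intro σ
    rw [Finset.sum_eq_single (⟨p, by omega⟩ : Fin (m+3))]
    · congr 1
      rw [eq_iff_iff]
      constructor
      · rintro ⟨⟨h1, h2⟩, -⟩
        exact ⟨h2, Finset.mem_range.mpr h1⟩
      · rintro ⟨h2, h1⟩
        exact ⟨⟨Finset.mem_range.mp h1, h2⟩, rfl⟩
    · intro q _ hq
      rw [if_neg]
      rintro ⟨-, hqp⟩
      exact hq (Fin.ext (by simpa using hqp))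
    · intro h
      exact absurd (Finset.mem_univ _) h
  rw [Finset.sum_comm, Finset.sum_congr rfl fun σ _ => hcollapseB σ]
  rw [Finset.sum_comm (t := Finset.univ), Finset.sum_congr rfl fun σ _ => hcollapseA σ]
  rw [Finset.sum_add_distrib]
  congr 1
  · rw [show (∑ x ∈ range p, 2 * SB m x) = 2 * ∑ x ∈ range p, SB m x by
        rw [Finset.mul_sum]]
    rw [hRHS1, Finset.mul_sum]
    refine Finset.sum_congr rfl fun σ _ => ?_
    rw [mul_ite, mul_zero]
  · rw [hRHS2]

lemma nda_two (π : Equiv.Perm (Fin 2)) : NoDoubleAsc π := by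
  rintro i ⟨-, h2⟩
  have := asc_bound π _ h2
  omega

lemma dd_two (π : Equiv.Perm (Fin 2)) : dd π = 0 := by
  unfold dd
  rw [Finset.card_eq_zero, Finset.filter_eq_empty_iff]
  rintro i - ⟨-, h2⟩
  have := desc_bound π _ h2
  omega

lemma SB_base (p : ℕ) : SB 0 p = if 1 = p then 1 else 0 := by
  show (∑ π : Equiv.Perm (Fin 2),
      if BBc 2 π ∧ ((π 0 : Fin 2) : ℕ) = p then 2^(dd π) else 0) = _
  rw [sum_perm_decomp]
  have hterm : ∀ (q : Fin 2) (σ : Equiv.Perm (Fin 1)),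
      (if BBc 2 (consPerm q σ) ∧ ((consPerm q σ 0 : Fin 2) : ℕ) = p
        then 2^(dd (consPerm q σ)) else 0)
      = if 0 < (q:ℕ) ∧ (q:ℕ) = p then 1 else 0 := by
    intro q σ
    rw [consPerm_zero, dd_two, pow_zero]
    congr 1
    rw [eq_iff_iff]
    have hσ0 : ((σ ⟨0, by omega⟩ : Fin 1) : ℕ) = 0 := by omega
    have hD : Desc (consPerm q σ) 0 ↔ 0 < (q:ℕ) := by
      rw [desc_consPerm_zero q σ (by omega), hσ0]
    constructor
    · rintro ⟨⟨-, hD0, -⟩, hqp⟩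
      exact ⟨hD.mp hD0, hqp⟩
    · rintro ⟨h0, hqp⟩
      exact ⟨⟨nda_two _, hD.mpr h0, hD.mpr h0⟩, hqp⟩
  simp only [hterm]
  rw [show (∑ q : Fin 2, ∑ _σ : Equiv.Perm (Fin 1),
      (if 0 < (q:ℕ) ∧ (q:ℕ) = p then 1 else 0))
    = ∑ q : Fin 2, (if 0 < (q:ℕ) ∧ (q:ℕ) = p then 1 else 0) from
      Finset.sum_congr rfl fun q _ => by
        rw [Finset.sum_const, Finset.card_univ, Fintype.card_perm]
        simp]
  rw [Fin.sum_univ_two]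
  simp

lemma SA_base (p : ℕ) : SA 0 p = 0 := by
  refine Finset.sum_eq_zero fun σ _ => ?_
  rw [if_neg]
  rintro ⟨⟨-, hA, hD⟩, -⟩
  exact not_asc_of_desc _ _ hD hA


lemma bridge : ∀ m p, p ≤ m + 1 → ((SB m p : ℤ) = fZ (m+2) p ∧ (SA m p : ℤ) = gZ (m+2) p) := by
  intro m
  induction m with
  | zero =>
      intro p hp
      constructor
      · rw [SB_base]
        have : fZ 2 p = (p : ℤ) := by
          unfold fZ
          rw [Finset.sum_range_succ, Finset.sum_range_succ]
          simp [D, numDerangements_zero]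
        rw [this]
        interval_cases p <;> simp
      · rw [SA_base]
        have : gZ 2 p = 0 := by
          unfold gZ
          rw [Finset.sum_range_succ, Finset.sum_range_succ]
          simp [D, numDerangements_one]
        rw [this]
        simp
  | succ m ih =>
      intro p hp
      constructor
      · rw [L2 m p (by omega)]
        rw [show ((m+1)+2) = (m+2)+1 from rfl, fZ_rec (m+2) p]
        push_cast
        refine Finset.sum_congr rfl fun s hs => ?_
        have hs' : s ≤ m + 1 := by
          have := Finset.mem_range.mp hs
          omega
        obtain ⟨h1, h2⟩ := ih s hs'
        rw [h1, h2]
      · rw [L1 m p (by omega)]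
        rw [show ((m+1)+2) = (m+2)+1 from rfl, gZ_rec (m+2) p (by omega) (by omega)]
        push_cast
        refine Finset.sum_congr rfl fun s hs => ?_
        have hs' : s ≤ m + 1 := by
          have := (Finset.mem_Ico.mp hs).2
          omega
        exact (ih s hs').1

lemma alpha_eq (m : ℕ) : alphaAB (m+2) = ∑ p ∈ range (m+2), SA m p := by
  unfold alphaAB
  rw [Finset.sum_filter]
  unfold SA
  rw [Finset.sum_comm]
  refine Finset.sum_congr rfl fun π _ => ?_
  rw [sum_ite_indicator (range (m+2)) ((π 0 : Fin (m+2)) : ℕ)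
      (ABc (m+2) π) (2^(dd π))]
  have hmem : ((π 0 : Fin (m+2)) : ℕ) ∈ range (m+2) := Finset.mem_range.mpr (π 0).is_lt
  by_cases h : ABc (m+2) π
  · rw [if_pos (show NoDoubleAsc π ∧ Asc π 0 ∧ Desc π (m+2-2) from h),
      if_pos ⟨h, hmem⟩]
  · rw [if_neg (show ¬(NoDoubleAsc π ∧ Asc π 0 ∧ Desc π (m+2-2)) from h),
      if_neg (by rintro ⟨h', -⟩; exact h h')]

lemma alpha_formula (m : ℕ) :
    (alphaAB (m+2) : ℤ) = ((m+2).factorial : ℤ) - 2 * D (m+2) := by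
  rw [alpha_eq]
  rw [← gZ_total (m+2) (by omega)]
  push_cast
  refine Finset.sum_congr rfl fun p hp => ?_
  exact (bridge m p (by have := Finset.mem_range.mp hp; omega)).2

end AlphaAux

/-- For n ≥ 3, α_n(a,b) = n · α_{n−1}(a,b) − 2·(−1)^n, with α_2(a,b) = 0. -/
theorem alphaAB_recursion :
    (∀ n : ℕ, 3 ≤ n → (alphaAB n : ℤ) = n * alphaAB (n - 1) - 2 * (-1) ^ n) ∧
    alphaAB 2 = 0 := by
  constructor
  · intro n hn
    obtain ⟨k, rfl⟩ : ∃ k, n = k + 3 := ⟨n - 3, by omega⟩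
    have e1 : (alphaAB (k+3) : ℤ) = ((k+3).factorial : ℤ) - 2 * AlphaAux.D (k+3) :=
      AlphaAux.alpha_formula (k+1)
    have e2 : (alphaAB (k+2) : ℤ) = ((k+2).factorial : ℤ) - 2 * AlphaAux.D (k+2) :=
      AlphaAux.alpha_formula k
    have e3 : alphaAB (k + 3 - 1) = alphaAB (k+2) := by norm_num
    have hD : AlphaAux.D (k+3) = ((k:ℤ)+3) * AlphaAux.D (k+2) - (-1)^(k+2) := by
      have := AlphaAux.D_succ (k+2)
      push_cast at this ⊢
      linarith [this]
    have hfac : ((k+3).factorial : ℤ) = ((k:ℤ)+3) * ((k+2).factorial : ℤ) := by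
      rw [show (k+3).factorial = (k+3) * (k+2).factorial from rfl]
      push_cast
      ring
    rw [e1, e3, e2, hD, hfac]
    have hpow : ((-1:ℤ))^(k+3) = -((-1:ℤ))^(k+2) := by
      rw [pow_succ]
      ring
    rw [hpow]
    push_cast
    ring
  · have e : (alphaAB 2 : ℤ) = ((2:ℕ).factorial : ℤ) - 2 * AlphaAux.D 2 :=
      AlphaAux.alpha_formula 0
    have hD2 : AlphaAux.D 2 = 1 := by
      unfold AlphaAux.D
      rw [show (2:ℕ) = 0 + 2 from rfl, numDerangements_add_two,
        numDerangements_zero, numDerangements_one]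
      simp
    rw [hD2] at e
    norm_num at e
    exact_mod_cast e
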